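/- Let A be an m×n real matrix and b ∈ ℝᵐ with X = {x ∈ ℝⁿ : A x ≤ b} nonempty, and let x⋆ be the unique least-norm point of X (the minimizer of ‖x‖ over X). Let Ā = [A | −b], K = { Āᵀ u : u ∈ ℝᵐ, u ≥ 0 } ⊆ ℝⁿ⁺¹, and ē = (0,…,0,1) ∈ ℝⁿ⁺¹. Then dist(ē, K)² = 1/(‖x⋆‖² + 1). -/

import Mathlib

/-!
Put `w = (x⋆, 1)`. Since `Ā w = A x⋆ - b ≤ 0`, `w` lies in the polar cone of `K`, and
`⟪ē, w⟫ = 1` forces `dist(ē, K) ≥ 1 / ‖w‖`. Conversely, let `p` be the point of `closure K`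
nearest to `ē`. As `K` is a cone, the residual `v = ē - p` is orthogonal to `p` and lies in the
polar of `K`, so `⟪ē, v⟫ = ‖v‖² = dist(ē, K)²`. Writing `v = (y, t)`, polarity reads `A y ≤ t b`
and `t = ‖y‖² + t²`; then `y / t ∈ X`, so `t ‖x⋆‖ ≤ ‖y‖`, whence `t (‖x⋆‖² + 1) ≤ 1`.
-/

open scoped RealInnerProductSpace Matrix

section ConeDistance

variable {E : Type*} [NormedAddCommGroup E] [InnerProductSpace ℝ E]

theorem inner_div_norm_le_infDist {C : Set E} (hC : C.Nonempty) {w : E}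
    (hw : ∀ z ∈ C, ⟪z, w⟫ ≤ 0) (e : E) : ⟪e, w⟫ / ‖w‖ ≤ Metric.infDist e C := by
  refine (Metric.le_infDist hC).2 fun z hz => ?_
  calc ⟪e, w⟫ / ‖w‖ ≤ ⟪e - z, w⟫ / ‖w‖ := by
        gcongr
        rw [inner_sub_left]
        linarith [hw z hz]
    _ ≤ dist e z := by
        rw [dist_eq_norm]
        exact div_le_of_le_mul₀ (norm_nonneg _) (norm_nonneg _) (real_inner_le_norm _ _)

theorem exists_polar_inner_eq_norm_sq_eq_infDist [CompleteSpace E] {C : Set E}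
    (hconv : Convex ℝ C) (h0 : (0 : E) ∈ C) (hsmul : ∀ c : ℝ, 0 ≤ c → ∀ z ∈ C, c • z ∈ C)
    (e : E) :
    ∃ v : E, (∀ z ∈ C, ⟪z, v⟫ ≤ 0) ∧ ⟪e, v⟫ = ‖v‖ ^ 2 ∧ ‖v‖ = Metric.infDist e C := by
  have hne : (closure C).Nonempty := ⟨0, subset_closure h0⟩
  obtain ⟨p, hp, hmin⟩ := exists_norm_eq_iInf_of_complete_convex hne isClosed_closure.isComplete
    hconv.closure e
  have hvar := (norm_eq_iInf_iff_real_inner_le_zero hconv.closure hp).1 hmin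
  have h2p : (2 : ℝ) • p ∈ closure C :=
    map_mem_closure (continuous_const_smul _) hp fun z hz => hsmul 2 zero_le_two z hz
  -- the variational inequality at `0` and at `2 • p`, both in the cone `closure C`
  have horth : ⟪e - p, p⟫ = 0 := by
    have hle := hvar 0 (subset_closure h0)
    have hge := hvar _ h2p
    rw [zero_sub, inner_neg_right] at hle
    rw [show (2 : ℝ) • p - p = p by module] at hge
    linarith
  refine ⟨e - p, fun z hz => ?_, ?_, ?_⟩
  · have := hvar z (subset_closure hz)
    rw [inner_sub_right, horth, real_inner_comm] at this
    linarith
  · rw [← real_inner_self_eq_norm_sq]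
    nth_rewrite 1 [← sub_add_cancel e p]
    rw [inner_add_left, real_inner_comm (e - p) p, horth, add_zero]
  · rw [hmin, ← Metric.infDist_closure, Metric.infDist_eq_iInf]
    simp only [dist_eq_norm]

end ConeDistance

namespace Matrix

variable {ι κ : Type*} [Fintype ι]

def rowCone (M : Matrix ι κ ℝ) : Set (EuclideanSpace ℝ κ) :=
  {z | ∃ u : ι → ℝ, 0 ≤ u ∧ z = (WithLp.equiv 2 (κ → ℝ)).symm (Mᵀ *ᵥ u)}

variable (M : Matrix ι κ ℝ)

theorem zero_mem_rowCone : (0 : EuclideanSpace ℝ κ) ∈ M.rowCone :=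
  ⟨0, le_rfl, by simp⟩

theorem smul_mem_rowCone {c : ℝ} (hc : 0 ≤ c) {z : EuclideanSpace ℝ κ} (hz : z ∈ M.rowCone) :
    c • z ∈ M.rowCone := by
  obtain ⟨u, hu, rfl⟩ := hz
  exact ⟨c • u, smul_nonneg hc hu, by simp [mulVec_smul]⟩

theorem convex_rowCone : Convex ℝ M.rowCone := by
  rintro _ ⟨u, hu, rfl⟩ _ ⟨u', hu', rfl⟩ a c ha hc -
  exact ⟨a • u + c • u', add_nonneg (smul_nonneg ha hu) (smul_nonneg hc hu'),
    by simp [mulVec_add, mulVec_smul]⟩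

theorem inner_toLp_transpose_mulVec [Fintype κ] (u : ι → ℝ) (v : EuclideanSpace ℝ κ) :
    ⟪(WithLp.equiv 2 (κ → ℝ)).symm (Mᵀ *ᵥ u), v⟫ = u ⬝ᵥ (M *ᵥ v) := by
  rw [EuclideanSpace.inner_eq_star_dotProduct, star_trivial, WithLp.equiv_symm_apply,
    WithLp.ofLp_toLp, mulVec_transpose, dotProduct_comm, dotProduct_mulVec]

theorem inner_nonpos_rowCone_iff [Fintype κ] [DecidableEq ι] (v : EuclideanSpace ℝ κ) :
    (∀ z ∈ M.rowCone, ⟪z, v⟫ ≤ 0) ↔ M *ᵥ v ≤ 0 := by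
  constructor
  · intro h i
    have := h _ ⟨Pi.single i 1, Pi.single_nonneg.2 zero_le_one, rfl⟩
    rwa [inner_toLp_transpose_mulVec, single_one_dotProduct] at this
  · rintro h _ ⟨u, hu, rfl⟩
    rw [inner_toLp_transpose_mulVec, ← dotProduct_zero u]
    exact dotProduct_le_dotProduct_of_nonneg_left h hu

end Matrix

namespace EuclideanSpace

variable {n : ℕ}

def snoc (x : EuclideanSpace ℝ (Fin n)) (t : ℝ) : EuclideanSpace ℝ (Fin (n + 1)) :=
  WithLp.toLp 2 (Fin.snoc x.ofLp t)

@[simp]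
theorem ofLp_snoc (x : EuclideanSpace ℝ (Fin n)) (t : ℝ) :
    (snoc x t).ofLp = Fin.snoc x.ofLp t :=
  rfl

theorem norm_sq_snoc (x : EuclideanSpace ℝ (Fin n)) (t : ℝ) :
    ‖snoc x t‖ ^ 2 = ‖x‖ ^ 2 + t ^ 2 := by
  simp [real_norm_sq_eq, Fin.sum_univ_castSucc, snoc]

theorem exists_eq_snoc (v : EuclideanSpace ℝ (Fin (n + 1))) : ∃ x t, v = snoc x t :=
  ⟨WithLp.toLp 2 (Fin.init v.ofLp), v (Fin.last n), by simp [snoc, Fin.snoc_init_self]⟩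

theorem inner_single_last_snoc (x : EuclideanSpace ℝ (Fin n)) (t : ℝ) :
    ⟪single (Fin.last n) 1, snoc x t⟫ = t := by
  simp [inner_single_left, snoc]

end EuclideanSpace

theorem Matrix.of_snoc_mulVec_snoc {R ι : Type*} [CommRing R] {n : ℕ} (A : Matrix ι (Fin n) R)
    (b : ι → R) (y : Fin n → R) (t : R) :
    (Matrix.of fun i => Fin.snoc (A i) (-(b i))) *ᵥ Fin.snoc y t = A *ᵥ y - t • b := by
  ext i
  simp only [mulVec, dotProduct, of_apply, Fin.sum_univ_castSucc, Fin.snoc_castSucc,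
    Fin.snoc_last, Pi.sub_apply, Pi.smul_apply, smul_eq_mul]
  ring

theorem mul_norm_le_of_mulVec_le_smul {ι κ : Type*} [Fintype κ] {A : Matrix ι κ ℝ} {b : ι → ℝ}
    {x : EuclideanSpace ℝ κ} (hx : ∀ z : EuclideanSpace ℝ κ, A *ᵥ z ≤ b → ‖x‖ ≤ ‖z‖)
    {t : ℝ} (ht : 0 < t) {y : EuclideanSpace ℝ κ} (hy : A *ᵥ y ≤ t • b) : t * ‖x‖ ≤ ‖y‖ := by
  have hmem : A *ᵥ (t⁻¹ • y : EuclideanSpace ℝ κ) ≤ b := by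
    rw [WithLp.ofLp_smul, Matrix.mulVec_smul, ← inv_smul_smul₀ ht.ne' b]
    exact smul_le_smul_of_nonneg_left hy (inv_nonneg.2 ht.le)
  have := hx _ hmem
  rw [norm_smul, Real.norm_of_nonneg (inv_nonneg.2 ht.le)] at this
  exact (le_inv_mul_iff₀ ht).1 this

/-- With `X = {x : A x ≤ b}` nonempty and `x⋆` its (unique) least-norm
point, `Ā = [A | −b]`, `K = {Āᵀu : u ≥ 0}` and `ē = (0,…,0,1)`, one has
`dist(ē, K)² = 1/(‖x⋆‖² + 1)`. -/
theorem cone_dist_sq_eq_inv_least_norm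
    (m n : ℕ) (A : Matrix (Fin m) (Fin n) ℝ) (b : Fin m → ℝ)
    (X : Set (EuclideanSpace ℝ (Fin n)))
    (hX : X = {x : EuclideanSpace ℝ (Fin n) | A.mulVec x ≤ b})
    (xstar : EuclideanSpace ℝ (Fin n))
    (hxstar : xstar ∈ X ∧ ∀ y ∈ X, ‖xstar‖ ≤ ‖y‖)
    (Abar : Matrix (Fin m) (Fin (n + 1)) ℝ)
    (hAbar : Abar = Matrix.of fun i => Fin.snoc (A i) (-(b i)))
    (K : Set (EuclideanSpace ℝ (Fin (n + 1))))
    (hK : K = {z : EuclideanSpace ℝ (Fin (n + 1)) | ∃ u : Fin m → ℝ, 0 ≤ u ∧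
        z = (WithLp.equiv 2 (Fin (n + 1) → ℝ)).symm (Abar.transpose.mulVec u)})
    (ebar : EuclideanSpace ℝ (Fin (n + 1)))
    (hebar : ebar = EuclideanSpace.single (Fin.last n) 1) :
    (Metric.infDist ebar K) ^ 2 = 1 / (‖xstar‖ ^ 2 + 1) := by
  subst hX
  obtain ⟨hxX, hxmin⟩ := hxstar
  replace hK : K = Abar.rowCone := hK
  subst hK
  have hpolar (y : EuclideanSpace ℝ (Fin n)) (t : ℝ) :
      (∀ z ∈ Abar.rowCone, ⟪z, EuclideanSpace.snoc y t⟫ ≤ 0) ↔ A *ᵥ y ≤ t • b := by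
    rw [Matrix.inner_nonpos_rowCone_iff, hAbar, EuclideanSpace.ofLp_snoc,
      Matrix.of_snoc_mulVec_snoc, sub_nonpos]
  set d := Metric.infDist ebar Abar.rowCone
  have hebar_snoc (x : EuclideanSpace ℝ (Fin n)) (t : ℝ) : ⟪ebar, EuclideanSpace.snoc x t⟫ = t :=
    hebar ▸ EuclideanSpace.inner_single_last_snoc x t
  have hw : ‖EuclideanSpace.snoc xstar 1‖ ^ 2 = ‖xstar‖ ^ 2 + 1 := by
    rw [EuclideanSpace.norm_sq_snoc, one_pow]
  have hlow : 1 ≤ (‖xstar‖ ^ 2 + 1) * d ^ 2 := by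
    have := inner_div_norm_le_infDist ⟨0, Abar.zero_mem_rowCone⟩
      ((hpolar xstar 1).2 (by simpa using hxX)) ebar
    have hw_pos : 0 < ‖EuclideanSpace.snoc xstar 1‖ := by
      nlinarith [norm_nonneg (EuclideanSpace.snoc xstar 1)]
    rw [hebar_snoc, div_le_iff₀' hw_pos] at this
    rw [← hw, ← mul_pow]
    exact one_le_pow₀ this
  obtain ⟨v, hvK, hve, hvd⟩ := exists_polar_inner_eq_norm_sq_eq_infDist
    Abar.convex_rowCone Abar.zero_mem_rowCone (fun _ hc _ => Abar.smul_mem_rowCone hc) ebar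
  obtain ⟨y, t, rfl⟩ := EuclideanSpace.exists_eq_snoc v
  have ht : t = d ^ 2 := by rw [← hebar_snoc y t, hve, hvd]
  have hnorm : ‖y‖ ^ 2 + t ^ 2 = t := by rw [← EuclideanSpace.norm_sq_snoc, hvd, ht]
  have ht_pos : 0 < t := pos_of_mul_pos_right (ht ▸ hlow.trans_lt' one_pos) (by positivity)
  have hyt := mul_norm_le_of_mulVec_le_smul hxmin ht_pos ((hpolar y t).1 hvK)
  rw [← ht, eq_div_iff (by positivity)]
  nlinarith [mul_self_le_mul_self (by positivity) hyt]
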